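/- Let v be a bounded solution of the one-dimensional heat equation v_t = v_yy on ℝ × (0,∞) given by convolution of an initial datum v₀ ∈ L¹(ℝ) ∩ L^∞(ℝ) with the Gaussian heat kernel. Then √t · ‖v(·,t) − M·G(·,t)‖_{L^∞(ℝ)} → 0 as t → ∞, where M = ∫_ℝ v₀(y) dy and G(y,t) = (1/√(4πt))·e^{−y²/(4t)}. -/

import Mathlib

open Real MeasureTheory Filter Topology

/-!
Write `v(y,t) - M G(y,t) = ∫ (G(y-s,t) - G(y,t)) v₀(s) ds`. Since `‖G(·,t)‖_∞ = 1/√(4πt)` and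
`‖∂_y G(·,t)‖_∞ ≤ 1/(√(4π) t)`, the kernel difference is at most
`min (2/√(4πt)) (|s|/(√(4π) t))`, so uniformly in `y`
`√t |v(y,t) - M G(y,t)| ≤ ∫ min (2/√(4π)) (|s|/√(4πt)) |v₀(s)| ds`,
and the right-hand side tends to `0` by dominated convergence with dominating function
`(2/√(4π)) |v₀|`.
-/

lemma abs_mul_exp_neg_sq_div_le {a : ℝ} (ha : 0 < a) (z : ℝ) :
    |z| * exp (-z ^ 2 / a) ≤ √a := by
  have hsa : 0 < √a := sqrt_pos.mpr ha
  have hx : |z| / √a ≤ exp (z ^ 2 / a) := by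
    have h1 : |z| / √a ≤ (z / √a) ^ 2 + 1 := by
      rw [show |z| / √a = |z / √a| by rw [abs_div, abs_of_pos hsa]]
      nlinarith [sq_abs (z / √a), abs_nonneg (z / √a)]
    have h2 : (z / √a) ^ 2 = z ^ 2 / a := by rw [div_pow, sq_sqrt ha.le]
    linarith [add_one_le_exp (z ^ 2 / a)]
  rw [neg_div, exp_neg, ← div_eq_mul_inv, div_le_iff₀ (exp_pos _)]
  rwa [div_le_iff₀ hsa, mul_comm] at hx

lemma abs_integral_comp_sub_mul_sub_le {K f : ℝ → ℝ} {B L : ℝ} (hf : Integrable f)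
    (hKc : Continuous K) (hKB : ∀ z, |K z| ≤ B) (hKL : ∀ z w, |K z - K w| ≤ L * |z - w|)
    (y : ℝ) :
    |(∫ s, K (y - s) * f s) - (∫ s, f s) * K y| ≤ ∫ s, min (2 * B) (L * |s|) * |f s| := by
  have hconv : Integrable fun s => K (y - s) * f s :=
    hf.bdd_mul (hKc.comp (continuous_sub_left y)).aestronglyMeasurable
      (Eventually.of_forall fun s => hKB (y - s))
  have hbound : Integrable fun s => min (2 * B) (L * |s|) * |f s| := by
    refine hf.abs.bdd_mul (c := 2 * B)
      (continuous_const.min (continuous_const.mul continuous_abs)).aestronglyMeasurable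
      (Eventually.of_forall fun s => ?_)
    have hB : 0 ≤ B := (abs_nonneg _).trans (hKB 0)
    have hL : 0 ≤ L := by simpa using (abs_nonneg _).trans (hKL 1 0)
    rw [Real.norm_eq_abs, abs_le]
    exact ⟨by linarith [le_min (by linarith : 0 ≤ 2 * B) (by positivity : 0 ≤ L * |s|)],
      min_le_left _ _⟩
  have hkernel : ∀ s, |K (y - s) - K y| ≤ min (2 * B) (L * |s|) := fun s =>
    le_min (by linarith [abs_sub (K (y - s)) (K y), hKB (y - s), hKB y])
      (by simpa using hKL (y - s) y)
  calc |(∫ s, K (y - s) * f s) - (∫ s, f s) * K y|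
      = |∫ s, (K (y - s) - K y) * f s| := by
        rw [mul_comm, ← integral_const_mul, ← integral_sub hconv (hf.const_mul _)]
        simp only [sub_mul]
    _ ≤ ∫ s, |(K (y - s) - K y) * f s| := abs_integral_le_integral_abs
    _ ≤ ∫ s, min (2 * B) (L * |s|) * |f s| :=
        integral_mono_of_nonneg (Eventually.of_forall fun s => abs_nonneg _) hbound
          (Eventually.of_forall fun s => by
            dsimp only
            rw [abs_mul]; exact mul_le_mul_of_nonneg_right (hkernel s) (abs_nonneg _))

lemma tendsto_integral_min_abs_div_mul_abs {f : ℝ → ℝ} (hf : Integrable f) {c : ℝ}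
    (hc : 0 ≤ c) : Tendsto (fun r => ∫ s, min c (|s| / r) * |f s|) atTop (𝓝 0) := by
  have hlim : ∀ s, Tendsto (fun r => min c (|s| / r) * |f s|) atTop (𝓝 0) := fun s => by
    have h := (tendsto_const_nhds (x := c)).min
      ((tendsto_const_nhds (x := |s|)).div_atTop tendsto_id)
    simpa [min_eq_right hc] using h.mul_const |f s|
  simpa using tendsto_integral_filter_of_dominated_convergence (fun s => c * |f s|)
    (Eventually.of_forall fun r =>
      ((continuous_const.min (continuous_abs.div_const r)).aestronglyMeasurable).mul
        hf.abs.aestronglyMeasurable)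
    (by
      filter_upwards [eventually_ge_atTop 0] with r hr
      refine Eventually.of_forall fun s => ?_
      rw [Pi.mul_apply, Real.norm_eq_abs, abs_mul, abs_abs,
        abs_of_nonneg (le_min hc (by positivity))]
      exact mul_le_mul_of_nonneg_right (min_le_left _ _) (abs_nonneg _))
    (hf.abs.const_mul c) (Eventually.of_forall hlim)

noncomputable def heatKernel (t y : ℝ) : ℝ := 1 / √(4 * π * t) * exp (-y ^ 2 / (4 * t))

namespace heatKernel

variable {t : ℝ}

lemma continuous (t : ℝ) : Continuous (heatKernel t) := by
  unfold heatKernel; fun_prop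

lemma pos (ht : 0 < t) (y : ℝ) : 0 < heatKernel t y := by
  unfold heatKernel; positivity

lemma abs_le (ht : 0 < t) (y : ℝ) : |heatKernel t y| ≤ 1 / √(4 * π * t) := by
  have hexp : exp (-y ^ 2 / (4 * t)) ≤ 1 :=
    exp_le_one_iff.mpr (div_nonpos_of_nonpos_of_nonneg (by nlinarith) (by positivity))
  rw [abs_of_pos (pos ht y), heatKernel]
  exact mul_le_of_le_one_right (by positivity) hexp

lemma hasDerivAt (t y : ℝ) :
    HasDerivAt (heatKernel t) (heatKernel t y * (-(2 * y) / (4 * t))) y := by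
  have h : HasDerivAt (fun y : ℝ => -y ^ 2 / (4 * t)) (-(2 * y) / (4 * t)) y := by
    simpa using (hasDerivAt_pow 2 y).neg.div_const (4 * t)
  rw [heatKernel, mul_assoc]
  exact h.exp.const_mul _

lemma abs_deriv_le (ht : 0 < t) (y : ℝ) :
    |heatKernel t y * (-(2 * y) / (4 * t))| ≤ 1 / (√(4 * π) * t) := by
  have key := abs_mul_exp_neg_sq_div_le (by positivity : 0 < 4 * t) y
  have hs : √(4 * π * t) = √(4 * π) * √t := sqrt_mul (by positivity) t
  have h4t : √(4 * t) = 2 * √t := by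
    rw [sqrt_mul (by norm_num), show (4 : ℝ) = 2 ^ 2 by norm_num, sqrt_sq (by norm_num)]
  calc |heatKernel t y * (-(2 * y) / (4 * t))|
      = (|y| * exp (-y ^ 2 / (4 * t))) / (2 * t * √(4 * π * t)) := by
        rw [abs_mul, abs_of_pos (pos ht y), abs_div, abs_neg, abs_mul, abs_two,
          abs_of_pos (by positivity : (0 : ℝ) < 4 * t), heatKernel]
        field_simp; ring
    _ ≤ √(4 * t) / (2 * t * √(4 * π * t)) := by gcongr
    _ = 1 / (√(4 * π) * t) := by
        rw [h4t, hs]; field_simp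

lemma abs_sub_le (ht : 0 < t) (z w : ℝ) :
    |heatKernel t z - heatKernel t w| ≤ 1 / (√(4 * π) * t) * |z - w| := by
  simpa only [Real.norm_eq_abs] using
    convex_univ.norm_image_sub_le_of_norm_hasDerivWithin_le
      (fun x _ => (hasDerivAt t x).hasDerivWithinAt)
      (fun x _ => by simpa only [Real.norm_eq_abs] using abs_deriv_le ht x)
      (Set.mem_univ w) (Set.mem_univ z)

end heatKernel

lemma heatKernel.sqrt_mul_abs_integral_sub_le {f : ℝ → ℝ} (hf : Integrable f) {t : ℝ}
    (ht : 0 < t) (y : ℝ) :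
    √t * |(∫ s, heatKernel t (y - s) * f s) - (∫ s, f s) * heatKernel t y| ≤
      ∫ s, min (2 / √(4 * π)) (|s| / √(4 * π * t)) * |f s| := by
  have hs : √(4 * π * t) = √(4 * π) * √t := sqrt_mul (by positivity) t
  have hst : 0 < √t := sqrt_pos.mpr ht
  calc √t * |(∫ s, heatKernel t (y - s) * f s) - (∫ s, f s) * heatKernel t y|
      ≤ √t * ∫ s, min (2 * (1 / √(4 * π * t))) (1 / (√(4 * π) * t) * |s|) * |f s| :=
        mul_le_mul_of_nonneg_left (abs_integral_comp_sub_mul_sub_le hf (continuous t)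
          (abs_le ht) (abs_sub_le ht) y) hst.le
    _ = ∫ s, min (2 / √(4 * π)) (|s| / √(4 * π * t)) * |f s| := by
        rw [← integral_const_mul]
        congr 1 with s
        rw [← mul_assoc, mul_min_of_nonneg _ _ hst.le, hs]
        congr 2
        · field_simp
        · field_simp
          rw [sq_sqrt ht.le]

theorem stmt6_general (v₀ : ℝ → ℝ) (hint : Integrable v₀)
    (G : ℝ → ℝ → ℝ)
    (hG : ∀ y t : ℝ, G y t = (1 / Real.sqrt (4 * π * t)) * Real.exp (-y ^ 2 / (4 * t)))
    (v : ℝ → ℝ → ℝ) (hv : ∀ y t : ℝ, 0 < t → v y t = ∫ s : ℝ, G (y - s) t * v₀ s) :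
    Tendsto (fun t : ℝ => Real.sqrt t * ⨆ y : ℝ, |v y t - (∫ s : ℝ, v₀ s) * G y t|)
      atTop (nhds 0) := by
  have hGK : ∀ y t, G y t = heatKernel t y := hG
  have hbound : ∀ t > 0, √t * ⨆ y, |v y t - (∫ s, v₀ s) * G y t| ≤
      ∫ s, min (2 / √(4 * π)) (|s| / √(4 * π * t)) * |v₀ s| := fun t ht => by
    rw [Real.mul_iSup_of_nonneg (sqrt_nonneg t)]
    refine ciSup_le fun y => ?_
    simp only [hv y t ht, hGK]
    exact heatKernel.sqrt_mul_abs_integral_sub_le hint ht y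
  have hr : Tendsto (fun t => √(4 * π * t)) atTop atTop :=
    tendsto_sqrt_atTop.comp (tendsto_id.const_mul_atTop (by positivity))
  refine tendsto_of_tendsto_of_tendsto_of_le_of_le' tendsto_const_nhds
    ((tendsto_integral_min_abs_div_mul_abs hint (c := 2 / √(4 * π)) (by positivity)).comp hr)
    (Eventually.of_forall fun t => ?_) ?_
  · exact mul_nonneg (sqrt_nonneg t) (Real.iSup_nonneg fun y => abs_nonneg _)
  · filter_upwards [eventually_gt_atTop 0] with t ht using hbound t ht

/-- If `v` is the heat-kernel convolution solution of `vₜ = v_yy` with initial datum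
`v₀ ∈ L¹ ∩ L^∞`, then `√t · ‖v(·,t) - M G(·,t)‖_∞ → 0` as `t → ∞`, where `M = ∫ v₀` and
`G(y,t) = (4πt)^{-1/2} e^{-y²/(4t)}` is the Gaussian heat kernel. -/
theorem stmt6 (v₀ : ℝ → ℝ) (hint : Integrable v₀) (hbdd : ∃ C, ∀ y, |v₀ y| ≤ C)
    (G : ℝ → ℝ → ℝ)
    (hG : ∀ y t : ℝ, G y t = (1 / Real.sqrt (4 * π * t)) * Real.exp (-y ^ 2 / (4 * t)))
    (v : ℝ → ℝ → ℝ) (hv : ∀ y t : ℝ, 0 < t → v y t = ∫ s : ℝ, G (y - s) t * v₀ s) :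
    Tendsto (fun t : ℝ => Real.sqrt t * ⨆ y : ℝ, |v y t - (∫ s : ℝ, v₀ s) * G y t|)
      atTop (nhds 0) :=
  stmt6_general v₀ hint G hG v hv
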